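/- Let g = ⊕ g(i) be a ℤ-grading of a simple Lie algebra determined by an element h̃ ∈ t with α(h̃) ≥ 0 for all simple roots α, and set Δ(1) = {γ ∈ Δ : γ(h̃) = 1} with Π(1) = Π ∩ Δ(1). Suppose Δ(1) is the set of positive roots with γ(h̃) = 1 (abelian case: γ(h̃) ∈ {−1,0,1} for all roots γ). For w in the set W⁰ of minimal-length coset representatives of W/W(0), the complement I_w = Δ(1) \ N(w) is an upper ideal of the poset Δ(1) (with order induced from the root poset via Π(0)), and w ↦ I_w is a bijection between W⁰ and the set of upper ideals of Δ(1). -/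

import Mathlib

variable {V : Type*} [NormedAddCommGroup V] [InnerProductSpace ℝ V]

/-- Data of a reduced crystallographic root system `Δ` in a Euclidean space, together with a
choice of positive system `Δ⁺` and the corresponding simple roots `Π`. -/
structure RootSystemData (V : Type*) [NormedAddCommGroup V] [InnerProductSpace ℝ V] where
  roots : Finset V
  pos : Finset V
  simples : Finset V
  zero_not_mem : (0 : V) ∉ roots
  neg_mem : ∀ γ ∈ roots, -γ ∈ roots
  reduced : ∀ γ ∈ roots, ∀ c : ℝ, c • γ ∈ roots → c = 1 ∨ c = -1
  crystallographic : ∀ γ ∈ roots, ∀ δ ∈ roots,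
    ∃ n : ℤ, 2 * (inner ℝ γ δ : ℝ) / (inner ℝ δ δ : ℝ) = (n : ℝ)
  reflect_mem : ∀ γ ∈ roots, ∀ δ ∈ roots,
    γ - (2 * (inner ℝ γ δ : ℝ) / (inner ℝ δ δ : ℝ)) • δ ∈ roots
  pos_subset : pos ⊆ roots
  pos_or_neg : ∀ γ ∈ roots, γ ∈ pos ∨ -γ ∈ pos
  pos_neg_disjoint : ∀ γ ∈ pos, -γ ∉ pos
  simples_subset : simples ⊆ pos
  simples_indep : LinearIndependent ℝ (fun α : {x // x ∈ simples} => (α : V))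
  pos_combo : ∀ γ ∈ pos, ∃ c : V → ℕ, γ = ∑ α ∈ simples, (c α : ℝ) • α

/-- Irreducibility: the roots admit no partition into two nonempty mutually orthogonal parts. -/
def RootSystemData.Irreducible (R : RootSystemData V) : Prop :=
  ∀ A B : Set V, A ∪ B = ↑R.roots → Disjoint A B →
    (∀ a ∈ A, ∀ b ∈ B, (inner ℝ a b : ℝ) = 0) → A = ∅ ∨ B = ∅

/-- The reflection in the hyperplane orthogonal to `δ`. -/
noncomputable def reflAt (δ : V) : Function.End V :=
  fun x => x - (2 * (inner ℝ x δ : ℝ) / (inner ℝ δ δ : ℝ)) • δ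

/-- The Weyl group, generated by the reflections in the roots (each reflection is an
involution, so the closure as a monoid of endomorphisms coincides with the generated group). -/
def weylGroup (R : RootSystemData V) : Submonoid (Function.End V) :=
  Submonoid.closure {f | ∃ δ ∈ R.roots, f = reflAt δ}

/-- The inversion set `N(w) = {γ ∈ Δ⁺ : w(γ) < 0}`. -/
def invSet (R : RootSystemData V) (w : Function.End V) : Set V :=
  {γ | γ ∈ R.pos ∧ -(w γ) ∈ R.pos}

/-- The pairing `(γ, θ∨) = 2(γ,θ)/(θ,θ)`. -/
noncomputable def copair (θ γ : V) : ℝ := 2 * (inner ℝ γ θ : ℝ) / (inner ℝ θ θ : ℝ)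

/-- `μ ≤ γ` iff `γ − μ` is a nonnegative integer combination of the simple roots lying in
the subset `Z`. -/
def rootLEon (simples : Finset V) (Z : Set V) (μ γ : V) : Prop :=
  ∃ c : V → ℕ, (∀ α, α ∉ Z → c α = 0) ∧ γ = μ + ∑ α ∈ simples, (c α : ℝ) • α

/-- The weights of `g(1)`: roots with `γ(h̃) = 1` for the defining functional `ℓ`. -/
def gradeOne (R : RootSystemData V) (ℓ : V →ₗ[ℝ] ℝ) : Set V :=
  {γ | γ ∈ R.roots ∧ ℓ γ = 1}

/-- The minimal-length coset representatives
`W⁰ = {w ∈ W : w(α) ∈ Δ⁺ for all α ∈ Δ(0)⁺}`. -/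
def minLengthReps (R : RootSystemData V) (ℓ : V →ₗ[ℝ] ℝ) : Set (Function.End V) :=
  {w | w ∈ weylGroup R ∧ ∀ α, α ∈ R.pos → ℓ α = 0 → w α ∈ R.pos}

/-- The upper ideal `I_w = Δ(1) \ N(w)` attached to `w ∈ W⁰`. -/
def idealOf (R : RootSystemData V) (ℓ : V →ₗ[ℝ] ℝ) (w : Function.End V) : Set V :=
  gradeOne R ℓ \ invSet R w

/-! For `w ∈ W⁰` the inversion set `N(w)` avoids `Δ(0)`, and since `w` keeps the simple roots of
`Π(0)` positive, `N(w)` is a lower set of `Δ(1)`; so `I_w` is an upper ideal. Conversely, for an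
upper ideal `I` the set `Δ(1) \ I` is biclosed: it is closed because `Δ(2) = ∅`, and its
complement in `Δ⁺` is closed because `I` is an upper ideal. Every biclosed set is the inversion
set of some `w ∈ W` (peel off a simple root and reflect), which then lies in `W⁰`; and `w` is
unique because, by the exchange condition, the only element of `W` without inversions is `1`. -/

open RealInnerProductSpace Pointwise

theorem reflAt_eq_reflection (δ : V) : reflAt δ = ⇑(ℝ ∙ δ)ᗮ.reflection := by
  funext x
  rw [Submodule.reflection_orthogonal_apply, Submodule.reflection_singleton_apply, reflAt,
    real_inner_self_eq_norm_sq, real_inner_comm, mul_div_assoc]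
  simp only [RCLike.ofReal_real_eq_id, id]
  module

theorem reflAt_apply (δ x : V) : reflAt δ x = x - copair δ x • δ := rfl

theorem reflAt_reflAt (δ x : V) : reflAt δ (reflAt δ x) = x := by
  rw [reflAt_eq_reflection, Submodule.reflection_reflection]

theorem reflAt_self (δ : V) : reflAt δ δ = -δ := by
  rw [reflAt_eq_reflection, Submodule.reflection_orthogonalComplement_singleton_eq_neg]

theorem reflAt_neg (δ : V) : reflAt (-δ) = reflAt δ := by
  funext x
  simp only [reflAt_apply, copair, inner_neg_left, inner_neg_right, neg_neg, mul_neg, neg_div,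
    neg_smul, smul_neg]

theorem reflAt_map_add (δ x y : V) : reflAt δ (x + y) = reflAt δ x + reflAt δ y := by
  rw [reflAt_eq_reflection, map_add]

theorem reflAt_map_neg (δ x : V) : reflAt δ (-x) = -reflAt δ x := by
  rw [reflAt_eq_reflection, map_neg]

theorem LinearIsometryEquiv.map_reflAt (L : V ≃ₗᵢ[ℝ] V) (δ x : V) :
    L (reflAt δ x) = reflAt (L δ) (L x) := by
  simp only [reflAt_apply, copair, LinearIsometryEquiv.inner_map_map, map_sub, map_smul]

namespace RootSystemData

variable (R : RootSystemData V)

theorem ne_zero_of_mem_roots {γ : V} (hγ : γ ∈ R.roots) : γ ≠ 0 :=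
  ne_of_mem_of_not_mem hγ R.zero_not_mem

theorem exists_linearMap_eq_on_simples (f : V → ℝ) :
    ∃ φ : V →ₗ[ℝ] ℝ, ∀ α ∈ R.simples, φ α = f α := by
  have hli : LinearIndepOn ℝ id (R.simples : Set V) := R.simples_indep
  refine ⟨(Module.Basis.extend hli).constr ℝ (fun i => f i), fun α hα => ?_⟩
  have hmem : α ∈ hli.extend (Set.subset_univ _) := hli.subset_extend _ hα
  simpa using (Module.Basis.extend hli).constr_basis ℝ (fun i => f i) ⟨α, hmem⟩

theorem nonneg_of_mem_pos (φ : V →ₗ[ℝ] ℝ) (hφ : ∀ α ∈ R.simples, 0 ≤ φ α) {γ : V}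
    (hγ : γ ∈ R.pos) : 0 ≤ φ γ := by
  obtain ⟨c, rfl⟩ := R.pos_combo γ hγ
  simp only [map_sum, map_smul, smul_eq_mul]
  exact Finset.sum_nonneg fun α hα => mul_nonneg (Nat.cast_nonneg _) (hφ α hα)

noncomputable def height : V →ₗ[ℝ] ℝ :=
  (R.exists_linearMap_eq_on_simples 1).choose

theorem height_of_mem_simples {α : V} (hα : α ∈ R.simples) : R.height α = 1 :=
  (R.exists_linearMap_eq_on_simples 1).choose_spec α hα

theorem exists_height_eq_nat {γ : V} (hγ : γ ∈ R.pos) :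
    ∃ n : ℕ, R.height γ = n ∧ 1 ≤ n := by
  obtain ⟨c, hc⟩ := R.pos_combo γ hγ
  refine ⟨∑ α ∈ R.simples, c α, ?_, Nat.one_le_iff_ne_zero.2 fun h0 => ?_⟩
  · simp only [hc, map_sum, map_smul, smul_eq_mul, Nat.cast_sum]
    exact Finset.sum_congr rfl fun α hα => by rw [R.height_of_mem_simples hα, mul_one]
  · refine R.ne_zero_of_mem_roots (R.pos_subset hγ) ?_
    rw [hc]
    exact Finset.sum_eq_zero fun α hα => by rw [Finset.sum_eq_zero_iff.1 h0 α hα]; simp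

theorem one_le_height {γ : V} (hγ : γ ∈ R.pos) : 1 ≤ R.height γ := by
  obtain ⟨n, hn, h1⟩ := R.exists_height_eq_nat hγ
  rw [hn]
  exact_mod_cast h1

theorem mem_pos_of_height_pos {γ : V} (hγ : γ ∈ R.roots) (h : 0 < R.height γ) :
    γ ∈ R.pos := by
  refine (R.pos_or_neg γ hγ).resolve_right fun hneg => ?_
  have := R.one_le_height hneg
  rw [map_neg] at this
  linarith

theorem add_mem_pos {a b : V} (ha : a ∈ R.pos) (hb : b ∈ R.pos) (hab : a + b ∈ R.roots) :
    a + b ∈ R.pos :=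
  R.mem_pos_of_height_pos hab <| by
    rw [map_add]; linarith [R.one_le_height ha, R.one_le_height hb]

theorem reflAt_mem_roots {δ γ : V} (hδ : δ ∈ R.roots) (hγ : γ ∈ R.roots) :
    reflAt δ γ ∈ R.roots :=
  R.reflect_mem γ hγ δ hδ

theorem reflAt_mem_pos {α γ : V} (hα : α ∈ R.simples) (hγ : γ ∈ R.pos) (hne : γ ≠ α) :
    reflAt α γ ∈ R.pos := by
  have hαr := R.pos_subset (R.simples_subset hα)
  have hγr := R.pos_subset hγ
  classical
  obtain ⟨φ, hφ⟩ := R.exists_linearMap_eq_on_simples fun β => if β = α then 0 else 1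
  have hφnn : ∀ β ∈ R.simples, 0 ≤ φ β := fun β hβ => by
    rw [hφ β hβ]; split_ifs <;> norm_num
  -- `φ` counts the simple roots other than `α` in `γ`, and is unchanged by `reflAt α`
  have hφγ : 0 < φ γ := by
    obtain ⟨c, hc⟩ := R.pos_combo γ hγ
    by_contra! hle
    have hφc : φ γ = ∑ β ∈ R.simples, (c β : ℝ) * φ β := by
      simp only [hc, map_sum, map_smul, smul_eq_mul]
    have hterm := (Finset.sum_eq_zero_iff_of_nonneg fun β hβ =>
      mul_nonneg (Nat.cast_nonneg (c β)) (hφnn β hβ)).1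
      (by rw [← hφc]; exact le_antisymm hle (R.nonneg_of_mem_pos φ hφnn hγ))
    have hγα : γ = (c α : ℝ) • α := by
      rw [hc, Finset.sum_eq_single α]
      · intro β hβ hβα
        have := hterm β hβ
        rw [hφ β hβ, if_neg hβα, mul_one, Nat.cast_eq_zero] at this
        rw [this, Nat.cast_zero, zero_smul]
      · exact fun h => absurd hα h
    rcases R.reduced α hαr (c α) (hγα ▸ hγr) with h1 | h1
    · exact hne (by rw [hγα, h1, one_smul])
    · linarith [(Nat.cast_nonneg (c α) : (0 : ℝ) ≤ c α)]
  have hφs : φ (reflAt α γ) = φ γ := by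
    rw [reflAt_apply, map_sub, map_smul, hφ α hα, if_pos rfl, smul_zero, sub_zero]
  refine (R.pos_or_neg _ (R.reflAt_mem_roots hαr hγr)).resolve_right fun hneg => ?_
  have := R.nonneg_of_mem_pos φ hφnn hneg
  rw [map_neg, hφs] at this
  linarith

theorem sub_mem_roots_of_inner_pos {γ δ : V} (hγ : γ ∈ R.roots) (hδ : δ ∈ R.roots)
    (hne : γ ≠ δ) (hpos : 0 < ⟪γ, δ⟫) : γ - δ ∈ R.roots := by
  obtain ⟨m, hm⟩ := R.crystallographic γ hγ δ hδ
  obtain ⟨n, hn⟩ := R.crystallographic δ hδ γ hγ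
  rw [real_inner_comm] at hn
  have hγγ : 0 < ⟪γ, γ⟫ := real_inner_self_pos.2 (R.ne_zero_of_mem_roots hγ)
  have hδδ : 0 < ⟪δ, δ⟫ := real_inner_self_pos.2 (R.ne_zero_of_mem_roots hδ)
  have hm1 : 1 ≤ m := by exact_mod_cast (hm ▸ by positivity : (0 : ℝ) < m)
  have hn1 : 1 ≤ n := by exact_mod_cast (hn ▸ by positivity : (0 : ℝ) < n)
  -- Cauchy–Schwarz bounds the product of the two Cartan integers by `4`
  have hmn : m * n ≤ 4 := by
    have hcs : ⟪γ, δ⟫ * ⟪γ, δ⟫ ≤ ⟪γ, γ⟫ * ⟪δ, δ⟫ := real_inner_mul_inner_self_le γ δ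
    have : (m : ℝ) * n ≤ 4 := by
      rw [← hm, ← hn, div_mul_div_comm, div_le_iff₀ (by positivity)]
      nlinarith
    exact_mod_cast this
  rcases hm1.eq_or_lt with hm1 | hm2
  · have := R.reflect_mem γ hγ δ hδ
    rwa [hm, ← hm1, Int.cast_one, one_smul] at this
  rcases hn1.eq_or_lt with hn1 | hn2
  · have := R.neg_mem _ (R.reflect_mem δ hδ γ hγ)
    rwa [real_inner_comm, hn, ← hn1, Int.cast_one, one_smul, neg_sub] at this
  -- otherwise both Cartan integers are `2`, which forces `γ = δ`
  have hm2 : (m : ℝ) = 2 := by exact_mod_cast (by nlinarith : m = 2)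
  have hn2 : (n : ℝ) = 2 := by exact_mod_cast (by nlinarith : n = 2)
  rw [hm2, div_eq_iff hδδ.ne'] at hm
  rw [hn2, div_eq_iff hγγ.ne'] at hn
  refine absurd (sub_eq_zero.1 ((inner_self_eq_zero (𝕜 := ℝ)).1 ?_)) hne
  rw [inner_sub_left, inner_sub_right, inner_sub_right, real_inner_comm γ δ]
  linarith

theorem exists_simple_inner_pos {γ : V} (hγ : γ ∈ R.pos) : ∃ β ∈ R.simples, 0 < ⟪γ, β⟫ := by
  obtain ⟨c, hc⟩ := R.pos_combo γ hγ
  by_contra! hno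
  have hγγ : ⟪γ, γ⟫ = ∑ β ∈ R.simples, (c β : ℝ) * ⟪γ, β⟫ := by
    nth_rewrite 2 [hc]
    simp only [inner_sum, real_inner_smul_right]
  refine (real_inner_self_pos.2 (R.ne_zero_of_mem_roots (R.pos_subset hγ))).not_ge ?_
  exact hγγ ▸ Finset.sum_nonpos fun β hβ =>
    mul_nonpos_of_nonneg_of_nonpos (Nat.cast_nonneg _) (hno β hβ)

theorem exists_simple_sub_mem_pos {γ : V} (hγ : γ ∈ R.pos) (hns : γ ∉ R.simples) :
    ∃ β ∈ R.simples, γ - β ∈ R.pos := by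
  obtain ⟨β, hβ, hβγ⟩ := R.exists_simple_inner_pos hγ
  have hsub := R.sub_mem_roots_of_inner_pos (R.pos_subset hγ)
    (R.pos_subset (R.simples_subset hβ)) (fun h => hns (h ▸ hβ)) hβγ
  refine ⟨β, hβ, (R.pos_or_neg _ hsub).resolve_right fun hneg => ?_⟩
  have := R.one_le_height hneg
  rw [neg_sub, map_sub, R.height_of_mem_simples hβ] at this
  linarith [R.one_le_height hγ]

theorem reflAt_mem_weylGroup {δ : V} (hδ : δ ∈ R.roots) : reflAt δ ∈ weylGroup R :=
  Submonoid.subset_closure ⟨δ, hδ, rfl⟩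

theorem exists_linearIsometryEquiv_of_mem_weylGroup {w : Function.End V}
    (hw : w ∈ weylGroup R) : ∃ L : V ≃ₗᵢ[ℝ] V, ⇑L = w := by
  induction hw using Submonoid.closure_induction with
  | mem x hx =>
    obtain ⟨δ, -, rfl⟩ := hx
    exact ⟨_, (reflAt_eq_reflection δ).symm⟩
  | one => exact ⟨1, rfl⟩
  | mul x y _ _ hx hy =>
    obtain ⟨L, rfl⟩ := hx
    obtain ⟨L', rfl⟩ := hy
    exact ⟨L * L', LinearIsometryEquiv.coe_mul L L'⟩

theorem mem_roots_of_mem_weylGroup {w : Function.End V} (hw : w ∈ weylGroup R) {γ : V}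
    (hγ : γ ∈ R.roots) : w γ ∈ R.roots := by
  induction hw using Submonoid.closure_induction generalizing γ with
  | mem x hx =>
    obtain ⟨δ, hδ, rfl⟩ := hx
    exact R.reflAt_mem_roots hδ hγ
  | one => exact hγ
  | mul x y _ _ hx hy => exact hx (hy hγ)

theorem exists_inverse_mem_weylGroup {w : Function.End V} (hw : w ∈ weylGroup R) :
    ∃ v ∈ weylGroup R, v * w = 1 ∧ w * v = 1 := by
  induction hw using Submonoid.closure_induction with
  | mem x hx =>
    obtain ⟨δ, hδ, rfl⟩ := hx
    have hinv : reflAt δ * reflAt δ = 1 := funext (reflAt_reflAt δ)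
    exact ⟨reflAt δ, R.reflAt_mem_weylGroup hδ, hinv, hinv⟩
  | one => exact ⟨1, Submonoid.one_mem _, mul_one 1, mul_one 1⟩
  | mul x y _ _ hx hy =>
    obtain ⟨u, hu, hux, hxu⟩ := hx
    obtain ⟨v, hv, hvy, hyv⟩ := hy
    refine ⟨v * u, Submonoid.mul_mem _ hv hu, ?_, ?_⟩
    · rw [mul_assoc, ← mul_assoc u, hux, one_mul, hvy]
    · rw [mul_assoc, ← mul_assoc y, hyv, one_mul, hxu]

noncomputable def wordProd (l : List V) : Function.End V := (l.map reflAt).prod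

@[simp]
theorem wordProd_nil : wordProd ([] : List V) = 1 := rfl

@[simp]
theorem wordProd_cons (β : V) (l : List V) : wordProd (β :: l) = reflAt β * wordProd l := by
  simp [wordProd]

@[simp]
theorem wordProd_append (l l' : List V) : wordProd (l ++ l') = wordProd l * wordProd l' := by
  simp [wordProd]

theorem wordProd_mem_weylGroup {l : List V} (hl : ∀ β ∈ l, β ∈ R.simples) :
    wordProd l ∈ weylGroup R := by
  induction l with
  | nil => exact Submonoid.one_mem _
  | cons β l ih =>
    rw [wordProd_cons]
    exact Submonoid.mul_mem _
      (R.reflAt_mem_weylGroup (R.pos_subset (R.simples_subset (hl β (by simp)))))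
      (ih fun x hx => hl x (by simp [hx]))

theorem exists_word_eq_reflAt_of_mem_pos {δ : V} (hδ : δ ∈ R.pos) :
    ∃ l : List V, (∀ β ∈ l, β ∈ R.simples) ∧ reflAt δ = wordProd l := by
  obtain ⟨n, hn, -⟩ := R.exists_height_eq_nat hδ
  induction n using Nat.strong_induction_on generalizing δ with
  | _ n ih =>
  by_cases hsim : δ ∈ R.simples
  · exact ⟨[δ], by simpa using hsim, by simp⟩
  obtain ⟨β, hβ, hβδ⟩ := R.exists_simple_inner_pos hδ
  have hβr := R.pos_subset (R.simples_subset hβ)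
  have hδ' := R.reflAt_mem_pos hβ hδ fun h => hsim (h ▸ hβ)
  obtain ⟨n', hn', -⟩ := R.exists_height_eq_nat hδ'
  -- `reflAt β` lowers the height of `δ` by the positive integer `copair β δ`
  have hlt : n' < n := by
    obtain ⟨m, hm⟩ := R.crystallographic δ (R.pos_subset hδ) β hβr
    have hm1 : 1 ≤ m := by
      exact_mod_cast (hm ▸ div_pos (by linarith)
        (real_inner_self_pos.2 (R.ne_zero_of_mem_roots hβr)) : (0 : ℝ) < m)
    have : R.height (reflAt β δ) = n - m := by
      rw [reflAt_apply, map_sub, map_smul, R.height_of_mem_simples hβ, hn, copair, hm,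
        smul_eq_mul, mul_one]
    exact_mod_cast (by linarith [(by exact_mod_cast hm1 : (1 : ℝ) ≤ m)] : (n' : ℝ) < n)
  obtain ⟨l, hl, hδl⟩ := ih n' hlt hδ' hn'
  -- conjugating `reflAt (reflAt β δ)` by `reflAt β` gives `reflAt δ`
  refine ⟨β :: (l ++ [β]), by simpa [or_imp, forall_and, hβ] using hl, funext fun x => ?_⟩
  have := ((ℝ ∙ β)ᗮ.reflection).map_reflAt (reflAt β δ) (reflAt β x)
  simp only [← reflAt_eq_reflection, reflAt_reflAt] at this
  simp only [wordProd_cons, wordProd_append, wordProd_nil, ← hδl, mul_one]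
  exact this.symm

theorem exists_word_eq_of_mem_weylGroup {w : Function.End V} (hw : w ∈ weylGroup R) :
    ∃ l : List V, (∀ β ∈ l, β ∈ R.simples) ∧ w = wordProd l := by
  induction hw using Submonoid.closure_induction with
  | mem x hx =>
    obtain ⟨δ, hδ, rfl⟩ := hx
    rcases R.pos_or_neg δ hδ with hpos | hneg
    · exact R.exists_word_eq_reflAt_of_mem_pos hpos
    · simpa only [reflAt_neg] using R.exists_word_eq_reflAt_of_mem_pos hneg
  | one => exact ⟨[], by simp, rfl⟩
  | mul x y _ _ hx hy =>
    obtain ⟨l, hl, rfl⟩ := hx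
    obtain ⟨l', hl', rfl⟩ := hy
    exact ⟨l ++ l', by simpa [or_imp, forall_and] using ⟨hl, hl'⟩, (wordProd_append l l').symm⟩

theorem exists_shorter_word_of_not_mem_pos {l : List V} (hl : ∀ β ∈ l, β ∈ R.simples)
    {α : V} (hα : α ∈ R.simples) (hlα : wordProd l α ∉ R.pos) :
    ∃ l' : List V, (∀ β ∈ l', β ∈ R.simples) ∧ l'.length + 1 = l.length ∧
      wordProd l * reflAt α = wordProd l' := by
  induction l with
  | nil => exact absurd (R.simples_subset hα) hlα
  | cons β l ih =>
    have hβ : β ∈ R.simples := hl β (by simp)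
    have hl' : ∀ x ∈ l, x ∈ R.simples := fun x hx => hl x (by simp [hx])
    by_cases hpos : wordProd l α ∈ R.pos
    · -- `s_β` is the reflection that turns `wordProd l α` negative, so `wordProd l α = β`
      have hβα : wordProd l α = β := by
        by_contra hne
        exact hlα (R.reflAt_mem_pos hβ hpos hne)
      refine ⟨l, hl', by simp, funext fun x => ?_⟩
      obtain ⟨L, hL⟩ :=
        R.exists_linearIsometryEquiv_of_mem_weylGroup (R.wordProd_mem_weylGroup hl')
      have := L.map_reflAt α (reflAt α x)
      rw [reflAt_reflAt, hL, hβα] at this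
      exact this.symm
    · obtain ⟨l', hl'', hlen, heq⟩ := ih hl' hpos
      refine ⟨β :: l', by simpa [or_imp, forall_and, hβ] using hl'', by simp [← hlen], ?_⟩
      rw [wordProd_cons, wordProd_cons, mul_assoc, heq]

theorem eq_one_of_forall_mem_pos {w : Function.End V} (hw : w ∈ weylGroup R)
    (hpos : ∀ γ ∈ R.pos, w γ ∈ R.pos) : w = 1 := by
  obtain ⟨l, hl, rfl⟩ := R.exists_word_eq_of_mem_weylGroup hw
  clear hw
  induction hn : l.length using Nat.strong_induction_on generalizing l with
  | _ n ih =>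
  rcases l.eq_nil_or_concat with rfl | ⟨l, α, rfl⟩
  · rfl
  have hα : α ∈ R.simples := hl α (by simp)
  have hl' : ∀ x ∈ l, x ∈ R.simples := fun x hx => hl x (by simp [hx])
  have hsplit : wordProd (l.concat α) = wordProd l * reflAt α := by simp
  obtain ⟨L, hL⟩ :=
    R.exists_linearIsometryEquiv_of_mem_weylGroup (R.wordProd_mem_weylGroup hl')
  have hlα : wordProd l α ∉ R.pos := fun h => by
    have := hpos α (R.simples_subset hα)
    rw [hsplit] at this
    change wordProd l (reflAt α α) ∈ R.pos at this
    rw [reflAt_self, ← hL, map_neg] at this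
    exact R.pos_neg_disjoint _ (hL ▸ h) this
  obtain ⟨l', hl'', hlen, heq⟩ := R.exists_shorter_word_of_not_mem_pos hl' hα hlα
  rw [hsplit, heq] at hpos ⊢
  exact ih l'.length (by simp at hn; omega) l' hl'' hpos rfl

theorem eq_of_invSet_eq {w w' : Function.End V} (hw : w ∈ weylGroup R) (hw' : w' ∈ weylGroup R)
    (h : invSet R w = invSet R w') : w = w' := by
  obtain ⟨v, hv, hvw', hw'v⟩ := R.exists_inverse_mem_weylGroup hw'
  -- `w w'⁻¹` maps `Δ⁺` into `Δ⁺`, hence is trivial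
  have hwv : w * v = 1 := by
    refine R.eq_one_of_forall_mem_pos (Submonoid.mul_mem _ hw hv) fun γ hγ => ?_
    have hδ := R.mem_roots_of_mem_weylGroup hv (R.pos_subset hγ)
    have hw'δ : w' (v γ) = γ := congrFun hw'v γ
    have hwδ := R.mem_roots_of_mem_weylGroup hw hδ
    show w (v γ) ∈ R.pos
    rcases R.pos_or_neg _ hδ with hpos | hneg
    · refine (R.pos_or_neg _ hwδ).resolve_right fun hinv => ?_
      have : v γ ∈ invSet R w' := h ▸ ⟨hpos, hinv⟩
      exact R.pos_neg_disjoint _ hγ (hw'δ ▸ this.2)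
    · obtain ⟨L, hL⟩ := R.exists_linearIsometryEquiv_of_mem_weylGroup hw
      obtain ⟨L', hL'⟩ := R.exists_linearIsometryEquiv_of_mem_weylGroup hw'
      have : -v γ ∈ invSet R w :=
        h ▸ ⟨hneg, by rw [← hL', map_neg, neg_neg, hL', hw'δ]; exact hγ⟩
      simpa [← hL] using this.2
  calc w = w * (v * w') := by rw [hvw', mul_one]
    _ = w' := by rw [← mul_assoc, hwv, one_mul]

def IsAddClosed (S : Set V) : Prop :=
  ∀ a ∈ S, ∀ b ∈ S, a + b ∈ R.roots → a + b ∈ S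

theorem IsAddClosed.reflAt_preimage {P : Set V} (hP : R.IsAddClosed P) {δ : V}
    (hδ : δ ∈ R.roots) : R.IsAddClosed {γ | reflAt δ γ ∈ P} := fun a ha b hb hab => by
  have := hP _ ha _ hb (by rw [← reflAt_map_add]; exact R.reflAt_mem_roots hδ hab)
  rwa [← reflAt_map_add] at this

theorem exists_mem_simples_of_isAddClosed {P : Set V} (hP : R.IsAddClosed P)
    (hneg : ∀ γ ∈ R.roots, γ ∈ P ↔ -γ ∉ P) (hne : (P ∩ R.pos).Nonempty) :
    ∃ α ∈ R.simples, α ∈ P := by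
  classical
  obtain ⟨γ₀, hγ₀P, hγ₀⟩ := hne
  obtain ⟨γ, hγ, hmin⟩ := (R.pos.filter (· ∈ P)).exists_min_image R.height
    ⟨γ₀, Finset.mem_filter.2 ⟨hγ₀, hγ₀P⟩⟩
  rw [Finset.mem_filter] at hγ
  by_cases hsim : γ ∈ R.simples
  · exact ⟨γ, hsim, hγ.2⟩
  obtain ⟨β, hβ, hγβ⟩ := R.exists_simple_sub_mem_pos hγ.1 hsim
  have hβr := R.pos_subset (R.simples_subset hβ)
  by_cases hβP : β ∈ P
  · exact ⟨β, hβ, hβP⟩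
  -- otherwise `-β` and `-(γ - β)` lie in `P`, and so does their sum `-γ`
  have hγβP : γ - β ∉ P := fun h => by
    have := hmin _ (Finset.mem_filter.2 ⟨hγβ, h⟩)
    rw [map_sub, R.height_of_mem_simples hβ] at this
    linarith
  have := hP _ ((hneg _ (R.neg_mem _ (R.pos_subset hγβ))).2 (by rwa [neg_neg]))
    _ ((hneg _ (R.neg_mem _ hβr)).2 (by rwa [neg_neg]))
    (by rw [← neg_add, sub_add_cancel]; exact R.neg_mem _ (R.pos_subset hγ.1))
  rw [← neg_add, sub_add_cancel] at this
  exact ((hneg _ (R.pos_subset hγ.1)).1 hγ.2 this).elim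

theorem reflAt_preimage_inter_pos_subset {P : Set V} {α : V} (hα : α ∈ R.simples)
    (hnαP : -α ∉ P) :
    {γ | reflAt α γ ∈ P} ∩ R.pos ⊆ (reflAt α ·) '' ((P ∩ R.pos) \ {α}) := by
  rintro γ ⟨hγP, hγ⟩
  have hγα : γ ≠ α := fun h => hnαP (by rwa [h, Set.mem_ofPred_eq, reflAt_self] at hγP)
  refine ⟨reflAt α γ, ⟨⟨hγP, R.reflAt_mem_pos hα hγ hγα⟩, fun h => ?_⟩, reflAt_reflAt α γ⟩
  rw [Set.mem_singleton_iff] at h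
  refine R.pos_neg_disjoint α (R.simples_subset hα) ?_
  rwa [← reflAt_reflAt α γ, h, reflAt_self] at hγ

theorem exists_mem_weylGroup_of_isAddClosed {P : Set V} (hP : R.IsAddClosed P)
    (hneg : ∀ γ ∈ R.roots, γ ∈ P ↔ -γ ∉ P) :
    ∃ w ∈ weylGroup R, ∀ γ ∈ R.roots, γ ∈ P ↔ -w γ ∈ R.pos := by
  induction hn : (P ∩ R.pos).ncard using Nat.strong_induction_on generalizing P with
  | _ n ih =>
  have hfin : (P ∩ R.pos).Finite := R.pos.finite_toSet.subset Set.inter_subset_right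
  rcases (P ∩ R.pos).eq_empty_or_nonempty with hempty | hne
  · refine ⟨1, Submonoid.one_mem _, fun γ hγ => ⟨fun hγP => ?_, fun hγneg => ?_⟩⟩
    · exact (R.pos_or_neg γ hγ).resolve_left fun h => hempty.subset ⟨hγP, h⟩
    · exact (hneg γ hγ).2 fun h => hempty.subset ⟨h, hγneg⟩
  obtain ⟨α, hα, hαP⟩ := R.exists_mem_simples_of_isAddClosed hP hneg hne
  have hαr := R.pos_subset (R.simples_subset hα)
  have hneg' : ∀ γ ∈ R.roots, γ ∈ {γ | reflAt α γ ∈ P} ↔ -γ ∉ {γ | reflAt α γ ∈ P} :=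
    fun γ hγ => by
      simpa only [Set.mem_ofPred_eq, reflAt_map_neg] using hneg _ (R.reflAt_mem_roots hαr hγ)
  have hlt : ({γ | reflAt α γ ∈ P} ∩ R.pos).ncard < n := by
    calc _ ≤ ((reflAt α ·) '' ((P ∩ R.pos) \ {α})).ncard :=
          Set.ncard_le_ncard (R.reflAt_preimage_inter_pos_subset hα ((hneg α hαr).1 hαP))
            (hfin.sdiff.image _)
      _ ≤ ((P ∩ R.pos) \ {α}).ncard := Set.ncard_image_le hfin.sdiff
      _ < n := hn ▸ Set.ncard_sdiff_singleton_lt_of_mem ⟨hαP, R.simples_subset hα⟩ hfin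
  obtain ⟨w, hw, hwP⟩ := ih _ hlt (hP.reflAt_preimage R hαr) hneg' rfl
  refine ⟨w * reflAt α, Submonoid.mul_mem _ hw (R.reflAt_mem_weylGroup hαr), fun γ hγ => ?_⟩
  have := hwP _ (R.reflAt_mem_roots hαr hγ)
  rwa [Set.mem_ofPred_eq, reflAt_reflAt] at this

def IsBiclosed (S : Set V) : Prop :=
  S ⊆ R.pos ∧ R.IsAddClosed S ∧ R.IsAddClosed (↑R.pos \ S)

theorem IsBiclosed.isAddClosed_union_neg {S : Set V} (hS : R.IsBiclosed S) :
    R.IsAddClosed (S ∪ -(↑R.pos \ S)) := by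
  obtain ⟨hSpos, hSadd, hTadd⟩ := hS
  have hmixed : ∀ a ∈ S, ∀ b ∈ ↑R.pos \ S, a - b ∈ R.roots → a - b ∈ S ∪ -(↑R.pos \ S) := by
    intro a ha b hb hab
    rcases R.pos_or_neg _ hab with hpos | hpos
    · refine Or.inl (by_contra fun h => ?_)
      have := hTadd _ ⟨hpos, h⟩ _ hb (by rw [sub_add_cancel]; exact R.pos_subset (hSpos ha))
      exact (sub_add_cancel a b ▸ this).2 ha
    · refine Or.inr ⟨hpos, fun h => hb.2 ?_⟩
      have := hSadd _ h _ ha (by rw [neg_sub, sub_add_cancel]; exact R.pos_subset hb.1)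
      rwa [neg_sub, sub_add_cancel] at this
  rintro a (ha | ha) b (hb | hb) hab
  · exact Or.inl (hSadd a ha b hb hab)
  · simpa using hmixed a ha (-b) hb (by simpa using hab)
  · simpa [add_comm] using hmixed b hb (-a) ha (by simpa [add_comm] using hab)
  · refine Or.inr ?_
    rw [Set.mem_neg, neg_add]
    exact hTadd _ ha _ hb (by rw [← neg_add]; exact R.neg_mem _ hab)

/-- `S ∪ -(Δ⁺ \ S)` is a closed set containing exactly one of `±γ` for each root `γ`, hence
of the form `w⁻¹(-Δ⁺)`. -/
theorem IsBiclosed.exists_mem_weylGroup_invSet_eq {S : Set V} (hS : R.IsBiclosed S) :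
    ∃ w ∈ weylGroup R, invSet R w = S := by
  have hSpos := hS.1
  have hnot_neg : ∀ γ ∈ R.pos, -γ ∉ S ∪ -(↑R.pos \ S) ↔ γ ∈ S := fun γ hγ => by
    have : -γ ∉ S := fun h => R.pos_neg_disjoint γ hγ (hSpos h)
    simp [Set.mem_neg, hγ, this]
  have hmem_pos : ∀ γ ∈ R.pos, γ ∈ S ∪ -(↑R.pos \ S) ↔ γ ∈ S := fun γ hγ => by
    simp [Set.mem_neg, R.pos_neg_disjoint γ hγ]
  have hneg : ∀ γ ∈ R.roots, γ ∈ S ∪ -(↑R.pos \ S) ↔ -γ ∉ S ∪ -(↑R.pos \ S) := fun γ hγ => by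
    rcases R.pos_or_neg γ hγ with hpos | hpos
    · rw [hmem_pos γ hpos, hnot_neg γ hpos]
    · have := (hmem_pos _ hpos).trans (hnot_neg _ hpos).symm
      rw [neg_neg] at this
      rw [this, not_not]
  obtain ⟨w, hw, hwP⟩ := R.exists_mem_weylGroup_of_isAddClosed (hS.isAddClosed_union_neg R) hneg
  refine ⟨w, hw, Set.ext fun γ => ⟨fun ⟨hγ, hwγ⟩ => ?_, fun hγ => ⟨hSpos hγ, ?_⟩⟩⟩
  · exact (hmem_pos γ hγ).1 ((hwP γ (R.pos_subset hγ)).2 hwγ)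
  · exact (hwP γ (R.pos_subset (hSpos hγ))).1 (Or.inl hγ)

theorem not_mem_invSet_of_rootLEon {w : Function.End V} (hw : w ∈ weylGroup R) {Z : Set V}
    (hZ : ∀ α ∈ R.simples, α ∈ Z → w α ∈ R.pos) {μ γ : V} (hμ : μ ∈ R.pos)
    (hμw : μ ∉ invSet R w) (hγ : γ ∈ R.roots) (hle : rootLEon R.simples Z μ γ) :
    γ ∉ invSet R w := by
  obtain ⟨L, rfl⟩ := R.exists_linearIsometryEquiv_of_mem_weylGroup hw
  obtain ⟨c, hcZ, rfl⟩ := hle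
  have hLμ : L μ ∈ R.pos := (R.pos_or_neg _ (R.mem_roots_of_mem_weylGroup hw
    (R.pos_subset hμ))).resolve_right fun h => hμw ⟨hμ, h⟩
  -- `L γ` is `L μ` plus a nonnegative combination of positive roots
  have hht : R.height (L μ) ≤ R.height (L (μ + ∑ α ∈ R.simples, (c α : ℝ) • α)) := by
    simp only [map_add, map_sum, map_smul, smul_eq_mul, le_add_iff_nonneg_right]
    refine Finset.sum_nonneg fun α hα => ?_
    by_cases hαZ : α ∈ Z
    · exact mul_nonneg (Nat.cast_nonneg _) (zero_le_one.trans (R.one_le_height (hZ α hα hαZ)))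
    · simp [hcZ α hαZ]
  rintro ⟨-, hneg⟩
  exact R.pos_neg_disjoint _ (R.mem_pos_of_height_pos (R.mem_roots_of_mem_weylGroup hw hγ)
    (by linarith [R.one_le_height hLμ])) hneg

end RootSystemData

section Grading

variable (R : RootSystemData V) {ℓ : V →ₗ[ℝ] ℝ}

theorem mem_pos_of_mem_gradeOne (hsimp : ∀ α ∈ R.simples, 0 ≤ ℓ α) {γ : V}
    (hγ : γ ∈ gradeOne R ℓ) : γ ∈ R.pos := by
  refine (R.pos_or_neg γ hγ.1).resolve_right fun hneg => ?_
  have := R.nonneg_of_mem_pos ℓ hsimp hneg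
  rw [map_neg, hγ.2] at this
  norm_num at this

theorem grade_eq_zero_or_eq_one (hab : ∀ γ ∈ R.roots, ℓ γ = -1 ∨ ℓ γ = 0 ∨ ℓ γ = 1)
    (hsimp : ∀ α ∈ R.simples, 0 ≤ ℓ α) {γ : V} (hγ : γ ∈ R.pos) : ℓ γ = 0 ∨ ℓ γ = 1 := by
  have := R.nonneg_of_mem_pos ℓ hsimp hγ
  rcases hab γ (R.pos_subset hγ) with h | h
  · linarith
  · exact h

theorem rootLEon_add_of_grade_eq_zero (hsimp : ∀ α ∈ R.simples, 0 ≤ ℓ α) {μ : V}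
    (hμ : μ ∈ R.pos) (hμ0 : ℓ μ = 0) (γ : V) : rootLEon R.simples {α | ℓ α = 0} γ (μ + γ) := by
  classical
  obtain ⟨c, hc⟩ := R.pos_combo μ hμ
  -- all simple roots occurring in `μ` have grade `0`, since `ℓ ≥ 0` on them
  have hterm : ∀ α ∈ R.simples, (c α : ℝ) * ℓ α = 0 := by
    refine (Finset.sum_eq_zero_iff_of_nonneg fun α hα =>
      mul_nonneg (Nat.cast_nonneg _) (hsimp α hα)).1 ?_
    simpa [hc, map_sum] using hμ0
  refine ⟨fun α => if ℓ α = 0 then c α else 0, fun α hα => if_neg hα, ?_⟩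
  rw [add_comm, hc]
  congr 1
  refine Finset.sum_congr rfl fun α hα => ?_
  dsimp only
  split_ifs with h
  · rfl
  · rw [(mul_eq_zero.1 (hterm α hα)).resolve_right h, Nat.cast_zero]

theorem isBiclosed_gradeOne_diff (hab : ∀ γ ∈ R.roots, ℓ γ = -1 ∨ ℓ γ = 0 ∨ ℓ γ = 1)
    (hsimp : ∀ α ∈ R.simples, 0 ≤ ℓ α) {I : Set V}
    (hup : ∀ μ ∈ I, ∀ γ ∈ gradeOne R ℓ, rootLEon R.simples {α | ℓ α = 0} μ γ → γ ∈ I) :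
    R.IsBiclosed (gradeOne R ℓ \ I) := by
  refine ⟨fun γ hγ => mem_pos_of_mem_gradeOne R hsimp hγ.1, ?_, ?_⟩
  · intro a ha b hb habr
    rcases hab _ habr with h | h | h <;> rw [map_add, ha.1.2, hb.1.2] at h <;> norm_num at h
  · rintro a ⟨ha, haS⟩ b ⟨hb, hbS⟩ habr
    refine ⟨R.add_mem_pos ha hb habr, fun ⟨hg, hnI⟩ => hnI ?_⟩
    -- one summand has grade `0`, so the other one lies below `a + b` and in `I`
    have key : ∀ x ∈ R.pos, ℓ x = 0 → ∀ y ∈ R.pos, y ∉ gradeOne R ℓ \ I →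
        x + y ∈ gradeOne R ℓ → x + y ∈ I := by
      intro x hx hx0 y hy hyS hxy
      have hy1 : ℓ y = 1 := by simpa [hx0] using hxy.2
      have hyI : y ∈ I := by_contra fun h => hyS ⟨⟨R.pos_subset hy, hy1⟩, h⟩
      exact hup y hyI _ hxy (rootLEon_add_of_grade_eq_zero R hsimp hx hx0 y)
    rcases grade_eq_zero_or_eq_one R hab hsimp ha with ha0 | ha1
    · exact key a ha ha0 b hb hbS hg
    · have hb0 : ℓ b = 0 := by have := hg.2; rw [map_add, ha1] at this; linarith
      rw [add_comm] at hg ⊢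
      exact key b hb hb0 a ha haS hg

theorem invSet_subset_gradeOne (hab : ∀ γ ∈ R.roots, ℓ γ = -1 ∨ ℓ γ = 0 ∨ ℓ γ = 1)
    (hsimp : ∀ α ∈ R.simples, 0 ≤ ℓ α) {w : Function.End V} (hw : w ∈ minLengthReps R ℓ) :
    invSet R w ⊆ gradeOne R ℓ := fun γ ⟨hγ, hwγ⟩ =>
  ⟨R.pos_subset hγ, (grade_eq_zero_or_eq_one R hab hsimp hγ).resolve_left fun h0 =>
    R.pos_neg_disjoint _ (hw.2 γ hγ h0) hwγ⟩

theorem mem_minLengthReps_of_invSet_subset {w : Function.End V} (hw : w ∈ weylGroup R)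
    (hsub : invSet R w ⊆ gradeOne R ℓ) : w ∈ minLengthReps R ℓ := by
  refine ⟨hw, fun α hα h0 => ?_⟩
  refine (R.pos_or_neg _ (R.mem_roots_of_mem_weylGroup hw (R.pos_subset hα))).resolve_right
    fun h => ?_
  have := (hsub ⟨hα, h⟩).2
  rw [h0] at this
  norm_num at this

end Grading

/-- Abelian `ℤ`-grading: for the grading of a simple Lie algebra defined by `ℓ` (with
`ℓ(γ) ∈ {−1,0,1}` on roots and `ℓ ≥ 0` on simple roots), for every `w ∈ W⁰` the set
`I_w = Δ(1) \ N(w)` is an upper ideal of the weight poset `Δ(1)` (ordered by adding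
nonnegative combinations of simple roots in `Π(0)`), and `w ↦ I_w` is a bijection between
`W⁰` and the set of upper ideals of `Δ(1)`. -/
theorem abelian_ideals_bijection (R : RootSystemData V) (ℓ : V →ₗ[ℝ] ℝ)
    (hab : ∀ γ ∈ R.roots, ℓ γ = -1 ∨ ℓ γ = 0 ∨ ℓ γ = 1)
    (hsimp : ∀ α ∈ R.simples, 0 ≤ ℓ α) :
    (∀ w ∈ minLengthReps R ℓ, ∀ μ ∈ idealOf R ℓ w, ∀ γ ∈ gradeOne R ℓ,
        rootLEon R.simples {α | ℓ α = 0} μ γ → γ ∈ idealOf R ℓ w) ∧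
    (∀ I : Set V, I ⊆ gradeOne R ℓ →
        (∀ μ ∈ I, ∀ γ ∈ gradeOne R ℓ, rootLEon R.simples {α | ℓ α = 0} μ γ → γ ∈ I) →
        ∃! w, w ∈ minLengthReps R ℓ ∧ I = idealOf R ℓ w) := by
  refine ⟨fun w hw μ hμ γ hγ hle => ⟨hγ, ?_⟩, fun I hI hup => ?_⟩
  · exact R.not_mem_invSet_of_rootLEon hw.1
      (fun α hα h0 => hw.2 α (R.simples_subset hα) h0)
      (mem_pos_of_mem_gradeOne R hsimp hμ.1) hμ.2 hγ.1 hle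
  obtain ⟨w, hw, hwI⟩ := (isBiclosed_gradeOne_diff R hab hsimp hup).exists_mem_weylGroup_invSet_eq
  refine ⟨w, ⟨mem_minLengthReps_of_invSet_subset R hw (hwI ▸ Set.sdiff_subset), ?_⟩, ?_⟩
  · rw [idealOf, hwI, Set.sdiff_sdiff_cancel_left hI]
  · rintro w' ⟨hw', rfl⟩
    refine R.eq_of_invSet_eq hw'.1 hw ?_
    rw [hwI, idealOf, Set.sdiff_sdiff_cancel_left (invSet_subset_gradeOne R hab hsimp hw')]
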